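/- arXiv:1512.02001 — 2 statements merged into one kernel-verified Lean document; each statement's English description precedes it below -/
import Mathlib

section
/- Let b ∈ L¹_per(Y) be a 1-periodic function on ℝ^d with Y = [−1/2, 1/2]^d, set b^ε(x) = b(x/ε), and let ψ ∈ C₀^∞(ℝ^d). Then lim_{ε→0} ∫_{ℝ^d} b^ε(x)ψ(x) dx = ⟨b⟩ ∫_{ℝ^d} ψ(x) dx, where ⟨b⟩ = ∫_Y b(y) dy. -/
open MeasureTheory Filter Finset Topology

noncomputable section

/-- Partial derivative in coordinate direction `i`. -/
def pd {d : ℕ} (i : Fin d) (f : (Fin d → ℝ) → ℝ) : (Fin d → ℝ) → ℝ :=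
  fun x => fderiv ℝ f x (Pi.single i 1)

/-- Higher-order derivative `D^α` for a multi-index `α`. -/
def Dm {d : ℕ} (α : Fin d → ℕ) (f : (Fin d → ℝ) → ℝ) : (Fin d → ℝ) → ℝ :=
  ((List.finRange d).foldr (fun i g => (pd i)^[α i] ∘ g) id) f

/-- Multi-indices of order exactly `m` (encoded with entries in `Fin (m+1)`). -/
def midx (d m : ℕ) : Finset (Fin d → Fin (m + 1)) :=
  Finset.univ.filter (fun α => ∑ i, (α i : ℕ) = m)

/-- Multi-indices of order at most `m`. -/
def midxLe (d m : ℕ) : Finset (Fin d → Fin (m + 1)) :=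
  Finset.univ.filter (fun α => ∑ i, (α i : ℕ) ≤ m)

/-- The underlying multi-index `Fin d → ℕ`. -/
def ord {d m : ℕ} (α : Fin d → Fin (m + 1)) : Fin d → ℕ := fun i => (α i : ℕ)

/-- The periodicity cell `Y = [-1/2, 1/2]^d`. -/
def cellY (d : ℕ) : Set (Fin d → ℝ) :=
  Set.Icc (fun _ => -(1/2 : ℝ)) (fun _ => (1/2 : ℝ))

/-- `f` is 1-periodic in each variable. -/
def Per {d : ℕ} (f : (Fin d → ℝ) → ℝ) : Prop :=
  ∀ (x : Fin d → ℝ) (k : Fin d → ℤ), f (fun i => x i + (k i : ℝ)) = f x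

/-- A representative of an element of the Sobolev space `H^m(ℝ^d)`:
the function (`D 0`) together with all its weak derivatives up to order `m`,
all square-integrable. -/
structure SobRep (d m : ℕ) where
  D : (Fin d → ℕ) → (Fin d → ℝ) → ℝ
  memLp : ∀ α : Fin d → ℕ, (∑ i, α i) ≤ m → MemLp (D α) 2 volume
  isWeakDeriv : ∀ α : Fin d → ℕ, (∑ i, α i) ≤ m →
    ∀ φ : (Fin d → ℝ) → ℝ, ContDiff ℝ (⊤ : ℕ∞) φ → HasCompactSupport φ →
      ∫ x, D α x * φ x = (-1 : ℝ) ^ (∑ i, α i) * ∫ x, D 0 x * Dm α φ x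

/-- A representative of an element of the periodic Sobolev space `H^m_per(Y)`:
a 1-periodic function (`D 0`) together with all its weak derivatives up to
order `m`, all square-integrable on the cell `Y`. -/
structure PerSob (d m : ℕ) where
  D : (Fin d → ℕ) → (Fin d → ℝ) → ℝ
  per : ∀ α : Fin d → ℕ, Per (D α)
  memLp : ∀ α : Fin d → ℕ, (∑ i, α i) ≤ m → MemLp (D α) 2 (volume.restrict (cellY d))
  isWeakDeriv : ∀ α : Fin d → ℕ, (∑ i, α i) ≤ m →
    ∀ φ : (Fin d → ℝ) → ℝ, ContDiff ℝ (⊤ : ℕ∞) φ → Per φ →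
      ∫ x in cellY d, D α x * φ x =
        (-1 : ℝ) ^ (∑ i, α i) * ∫ x in cellY d, D 0 x * Dm α φ x

namespace Stmt5Aux

variable {d : ℕ}

def vk (k : Fin d → ℤ) : Fin d → ℝ := fun i => (k i : ℝ)

def Q (d : ℕ) : Set (Fin d → ℝ) := Set.pi Set.univ fun _ => Set.Ico (-(1/2) : ℝ) (1/2)

def Qk (k : Fin d → ℤ) : Set (Fin d → ℝ) :=
  Set.pi Set.univ fun i => Set.Ico ((k i : ℝ) - 1/2) ((k i : ℝ) + 1/2)

lemma measurableSet_Q : MeasurableSet (Q d) :=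
  MeasurableSet.univ_pi fun _ => measurableSet_Ico

lemma measurableSet_Qk (k : Fin d → ℤ) : MeasurableSet (Qk k) :=
  MeasurableSet.univ_pi fun _ => measurableSet_Ico

lemma mem_Qk {k : Fin d → ℤ} {x : Fin d → ℝ} : x ∈ Qk k ↔ ∀ i, ⌊x i + 1/2⌋ = k i := by
  simp only [Qk, Set.mem_pi, Set.mem_univ, forall_true_left, Set.mem_Ico]
  refine forall_congr' fun i => ?_
  rw [Int.floor_eq_iff]
  constructor <;> intro h <;> constructor <;> push_cast at h ⊢ <;> linarith [h.1, h.2]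

lemma iUnion_Qk : (⋃ k : Fin d → ℤ, Qk k) = Set.univ := by
  ext x
  simp only [Set.mem_iUnion, Set.mem_univ, iff_true]
  exact ⟨fun i => ⌊x i + 1/2⌋, mem_Qk.mpr fun i => rfl⟩

lemma pairwise_disjoint_Qk : Pairwise (Function.onFun Disjoint (Qk (d := d))) := by
  intro k k' hkk'
  rw [Function.onFun, Set.disjoint_left]
  intro x hx hx'
  exact hkk' (funext fun i => ((mem_Qk.mp hx) i).symm.trans ((mem_Qk.mp hx') i))

lemma preimage_Qk (k : Fin d → ℤ) : (fun x => x + vk k) ⁻¹' Qk k = Q d := by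
  ext x
  simp only [Set.mem_preimage, Qk, Q, Set.mem_pi, Set.mem_univ, forall_true_left, Set.mem_Ico,
    Pi.add_apply, vk]
  refine forall_congr' fun i => ?_
  constructor <;> intro h <;> constructor <;> linarith [h.1, h.2]

lemma setIntegral_Qk (F : (Fin d → ℝ) → ℝ) (k : Fin d → ℤ) :
    ∫ x in Qk k, F x = ∫ x in Q d, F (x + vk k) := by
  rw [← preimage_Qk k]
  exact ((measurePreserving_add_right volume (vk k)).setIntegral_preimage_emb
    (MeasurableEquiv.addRight (vk k)).measurableEmbedding F (Qk k)).symm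

lemma integrableOn_Qk {F : (Fin d → ℝ) → ℝ} (k : Fin d → ℤ)
    (h : IntegrableOn (fun x => F (x + vk k)) (Q d)) : IntegrableOn F (Qk k) := by
  rw [← preimage_Qk k] at h
  exact (((measurePreserving_add_right volume (vk k)).restrict_preimage
      (measurableSet_Qk k)).integrable_comp_emb
    (MeasurableEquiv.addRight (vk k)).measurableEmbedding).mp h

lemma unfold {F : (Fin d → ℝ) → ℝ} (hF : Integrable F) :
    ∫ x, F x = ∑' k : Fin d → ℤ, ∫ x in Q d, F (x + vk k) := by
  have h1 : ∫ x, F x = ∫ x in ⋃ k : Fin d → ℤ, Qk k, F x := by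
    rw [iUnion_Qk, setIntegral_univ]
  rw [h1, integral_iUnion measurableSet_Qk pairwise_disjoint_Qk
    (by rw [iUnion_Qk]; exact hF.integrableOn)]
  exact tsum_congr fun k => setIntegral_Qk F k

lemma volume_Q : volume (Q d) = 1 := by
  rw [Q, volume_pi_pi]
  simp only [Real.volume_Ico]
  norm_num

lemma Q_ae_eq_cellY : (Q d : Set (Fin d → ℝ)) =ᵐ[volume] cellY d := by
  have h2 : volume (cellY d) = 1 := by
    rw [cellY, ← Set.pi_univ_Icc, volume_pi_pi]
    simp only [Real.volume_Icc]
    norm_num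
  refine ae_eq_of_subset_of_measure_ge ?_ (by rw [h2, volume_Q])
    measurableSet_Q.nullMeasurableSet (by rw [h2]; exact ENNReal.one_ne_top)
  intro x hx
  rw [cellY, ← Set.pi_univ_Icc]
  exact fun i _ => Set.Ico_subset_Icc_self (hx i trivial)

lemma restrict_Q_eq : (volume : Measure (Fin d → ℝ)).restrict (Q d) = volume.restrict (cellY d) :=
  Measure.restrict_congr_set Q_ae_eq_cellY

lemma per_add {b : (Fin d → ℝ) → ℝ} (hper : Per b) (x : Fin d → ℝ) (k : Fin d → ℤ) :
    b (x + vk k) = b x := hper x k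

lemma norm_le_of_mem_Q {x : Fin d → ℝ} (hx : x ∈ Q d) : ‖x‖ ≤ 1/2 := by
  rw [pi_norm_le_iff_of_nonneg (by norm_num)]
  intro i
  have h := hx i trivial
  rw [Real.norm_eq_abs, abs_le]
  exact ⟨h.1, h.2.le⟩

end Stmt5Aux

open Stmt5Aux

/-- mean value property of periodic oscillating functions:
for 1-periodic `b ∈ L¹(Y)` and `ψ ∈ C₀^∞(ℝ^d)`,
`∫ b(x/ε)ψ(x) dx → ⟨b⟩ ∫ ψ(x) dx` as `ε → 0⁺`. -/
theorem stmt5 (d : ℕ) (b : (Fin d → ℝ) → ℝ) (hper : Per b) (hmeas : Measurable b)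
    (hint : IntegrableOn b (cellY d) volume)
    (ψ : (Fin d → ℝ) → ℝ) (hψ : ContDiff ℝ (⊤ : ℕ∞) ψ) (hψc : HasCompactSupport ψ) :
    Tendsto (fun ε : ℝ => ∫ x, b (ε⁻¹ • x) * ψ x) (𝓝[>] 0)
      (𝓝 ((∫ y in cellY d, b y) * ∫ x, ψ x)) := by
  classical
  set c := ∫ x, ψ x with hc
  -- Lipschitz bound
  obtain ⟨L₀, hL₀⟩ := (hψc.fderiv ℝ).exists_bound_of_continuous (hψ.continuous_fderiv (by simp))
  set L := max L₀ 0 with hLdef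
  have hLnn : 0 ≤ L := le_max_right _ _
  have hlip : ∀ u v : Fin d → ℝ, ‖ψ u - ψ v‖ ≤ L * ‖u - v‖ := by
    intro u v
    exact Convex.norm_image_sub_le_of_norm_fderiv_le
      (fun x _ => (hψ.differentiable (by simp)).differentiableAt)
      (fun x _ => le_trans (hL₀ x) (le_max_left _ _)) convex_univ trivial trivial
  -- support radius
  obtain ⟨R₀, hR₀⟩ := hψc.isBounded.subset_closedBall 0
  set R := max R₀ 1 with hRdef
  have hR1 : (1:ℝ) ≤ R := le_max_right _ _
  have hRpos : (0:ℝ) < R := lt_of_lt_of_le one_pos hR1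
  have hψ0 : ∀ x : Fin d → ℝ, R < ‖x‖ → ψ x = 0 := by
    intro x hx
    apply image_eq_zero_of_notMem_tsupport
    intro hmem
    have h := hR₀ hmem
    rw [Metric.mem_closedBall, dist_zero_right] at h
    have : R₀ ≤ R := le_max_left _ _
    linarith
  -- b integrable on Q
  have hbQ : IntegrableOn b (Q d) volume := by
    rw [IntegrableOn, restrict_Q_eq]; exact hint
  have hbQint : (∫ x in Q d, b x) = ∫ y in cellY d, b y := by rw [restrict_Q_eq]
  obtain ⟨Cψ, hCψ⟩ := hψc.exists_bound_of_continuous hψ.continuous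
  have hQfin : volume (Q d) < ⊤ := by rw [volume_Q]; exact ENNReal.one_lt_top
  -- key estimate
  have key : ∀ ε : ℝ, ε ∈ Set.Ioc (0:ℝ) 1 →
      ‖(∫ x, b (ε⁻¹ • x) * ψ x) - (∫ y in cellY d, b y) * c‖
        ≤ ((∫ x in Q d, ‖b x‖) * (L * (9*R)^d)) * ε := by
    rintro ε ⟨hε, hε1⟩
    have hεne : ε ≠ 0 := hε.ne'
    set M : ℤ := ⌈R / ε⌉ + 2 with hMdef
    have hMge : R / ε + 2 ≤ (M:ℝ) := by
      rw [hMdef]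
      have := Int.le_ceil (R / ε)
      push_cast
      linarith
    have hMle : (M:ℝ) ≤ R / ε + 3 := by
      rw [hMdef]
      have := Int.ceil_lt_add_one (R / ε)
      push_cast
      linarith
    have hM2 : (2:ℝ) ≤ (M:ℝ) := by
      have : 0 < R / ε := div_pos hRpos hε
      linarith
    set K : Finset (Fin d → ℤ) := Fintype.piFinset (fun _ => Finset.Icc (-M) M) with hKdef
    have hM2' : (0:ℤ) ≤ 2*M + 1 := by exact_mod_cast (by linarith : (0:ℝ) ≤ 2*(M:ℝ)+1)
    -- cardinality bound
    have hcard : (K.card : ℝ) * ε ^ d ≤ (9*R)^d := by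
      have hRe : R / ε * ε = R := div_mul_cancel₀ R hεne
      have h2 : ((2*M+1 : ℤ) : ℝ) * ε ≤ 9*R := by
        have h7 : ε ≤ R := le_trans hε1 hR1
        push_cast
        nlinarith
      have hcardK : K.card = ((2*M+1).toNat)^d := by
        rw [hKdef, Fintype.card_piFinset]
        simp only [Int.card_Icc, Finset.prod_const, Finset.card_univ, Fintype.card_fin]
        congr 2
        omega
      rw [hcardK]
      have hcast : (((2*M+1).toNat : ℕ) : ℝ) = ((2*M+1 : ℤ) : ℝ) := by
        exact_mod_cast Int.toNat_of_nonneg hM2'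
      push_cast
      rw [hcast, ← mul_pow]
      exact pow_le_pow_left₀ (by positivity) h2 d
    -- vanishing of far translates
    have hzero : ∀ k : Fin d → ℤ, k ∉ K → ∀ x : Fin d → ℝ, ‖x‖ ≤ 1/2 →
        ψ (ε • (x + vk k)) = 0 := by
      intro k hk x hx
      apply hψ0
      obtain ⟨i, hi⟩ : ∃ i, k i ∉ Finset.Icc (-M) M := by
        by_contra h
        push_neg at h
        exact hk (Fintype.mem_piFinset.mpr h)
      rw [Finset.mem_Icc, not_and_or, not_le, not_le] at hi
      have hki : (M:ℝ) + 1 ≤ |(k i : ℝ)| := by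
        rcases hi with h | h
        · have h' : (M:ℝ) + 1 ≤ -(k i : ℝ) := by
            have h2 : k i + 1 ≤ -M := Int.lt_iff_add_one_le.mp h
            have h3 : ((k i : ℝ)) + 1 ≤ -(M:ℝ) := by exact_mod_cast h2
            linarith
          exact h'.trans (neg_le_abs _)
        · have h' : (M:ℝ) + 1 ≤ (k i : ℝ) := by
            exact_mod_cast Int.lt_iff_add_one_le.mp h
          exact h'.trans (le_abs_self _)
      have hxi : |x i| ≤ 1/2 := by
        have h := norm_le_pi_norm x i
        rw [Real.norm_eq_abs] at h
        linarith
      have h1 : (M:ℝ) + 1/2 ≤ |x i + (k i:ℝ)| := by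
        have hh : |(k i:ℝ)| ≤ |x i + (k i:ℝ)| + |x i| := by
          have : |(k i:ℝ)| = |(x i + (k i:ℝ)) - x i| := by ring_nf
          rw [this]
          exact abs_sub _ _
        linarith
      have h2 : ‖(ε • (x + vk k)) i‖ ≤ ‖ε • (x + vk k)‖ := norm_le_pi_norm _ i
      have h3 : (ε • (x + vk k)) i = ε * (x i + (k i:ℝ)) := rfl
      rw [h3, Real.norm_eq_abs, abs_mul, abs_of_pos hε] at h2
      have hRlt : R < ε * ((M:ℝ) + 1/2) := by
        have hRe : ε * (R/ε) = R := by field_simp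
        nlinarith
      nlinarith
    -- pieces are integrable on Q
    have hterm : ∀ k : Fin d → ℤ,
        Integrable (fun x => b x * ψ (ε • (x + vk k))) (volume.restrict (Q d)) := by
      intro k
      have hcont : Continuous fun x : Fin d → ℝ => ψ (ε • (x + vk k)) :=
        hψ.continuous.comp (((continuous_id.add continuous_const)).const_smul ε)
      have h := hbQ.bdd_mul hcont.aestronglyMeasurable (Eventually.of_forall fun x => hCψ _)
      simpa [mul_comm] using h
    have hψterm : ∀ k : Fin d → ℤ,
        Integrable (fun x => ψ (ε • (x + vk k))) (volume.restrict (Q d)) := by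
      intro k
      have hcont : Continuous fun x : Fin d → ℝ => ψ (ε • (x + vk k)) :=
        hψ.continuous.comp (((continuous_id.add continuous_const)).const_smul ε)
      refine Integrable.mono' (g := fun _ => Cψ) ?_ hcont.aestronglyMeasurable
        (Eventually.of_forall fun x => hCψ _)
      exact (integrableOn_const hQfin.ne)
    -- global integrability of the oscillating integrand
    have hg : Integrable (fun y : Fin d → ℝ => b y * ψ (ε • y)) volume := by
      have hsupp : Function.support (fun y : Fin d → ℝ => b y * ψ (ε • y)) ⊆
          ⋃ k ∈ K, Qk k := by
        intro x hx
        have hψx : ψ (ε • x) ≠ 0 := by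
          intro h0
          apply hx
          simp [h0]
        have hkK : (fun i => ⌊x i + 1/2⌋) ∈ K := by
          by_contra hkK
          have hfl : x ∈ Qk (fun i => ⌊x i + 1/2⌋) := mem_Qk.mpr fun i => rfl
          have hx' : x - vk (fun i => ⌊x i + 1/2⌋) ∈ Q d := by
            rw [← preimage_Qk (fun i => ⌊x i + 1/2⌋)]
            simpa using hfl
          have h0 := hzero _ hkK _ (norm_le_of_mem_Q hx')
          rw [sub_add_cancel] at h0
          exact hψx h0
        exact Set.mem_biUnion hkK (mem_Qk.mpr fun i => rfl)
      rw [← integrableOn_iff_integrable_of_support_subset hsupp]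
      refine integrableOn_finset_iUnion.mpr fun k _ => integrableOn_Qk k ?_
      refine (hterm k).congr (Eventually.of_forall fun x => ?_)
      show b x * ψ (ε • (x + vk k)) = b (x + vk k) * ψ (ε • (x + vk k))
      rw [per_add hper]
    -- scaling
    have scale : ∀ F : (Fin d → ℝ) → ℝ, (∫ x, F (ε⁻¹ • x)) = ε^d • ∫ x, F x := by
      intro F
      rw [MeasureTheory.Measure.integral_comp_inv_smul_of_nonneg volume F hε.le,
        Module.finrank_fintype_fun_eq_card, Fintype.card_fin]
    have e1 : (∫ x, b (ε⁻¹ • x) * ψ x) = ε^d • ∫ y, b y * ψ (ε • y) := by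
      have h := scale (fun z => b z * ψ (ε • z))
      simp only [smul_inv_smul₀ hεne] at h
      exact h
    -- unfolding the integral over cells
    have e2 : (∫ y, b y * ψ (ε • y)) = ∑ k ∈ K, ∫ x in Q d, b x * ψ (ε • (x + vk k)) := by
      have hzs : ∀ k : Fin d → ℤ, k ∉ K →
          (∫ x in Q d, (fun y : Fin d → ℝ => b y * ψ (ε • y)) (x + vk k)) = 0 := by
        intro k hk
        rw [setIntegral_congr_fun measurableSet_Q (g := fun _ => (0:ℝ)) (fun x hx => by
          show b (x + vk k) * ψ (ε • (x + vk k)) = 0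
          rw [hzero k hk x (norm_le_of_mem_Q hx), mul_zero])]
        simp
      rw [unfold hg, tsum_eq_sum hzs]
      refine Finset.sum_congr rfl fun k _ => setIntegral_congr_fun measurableSet_Q
        (fun x hx => ?_)
      show b (x + vk k) * ψ (ε • (x + vk k)) = b x * ψ (ε • (x + vk k))
      rw [per_add hper]
    have e3 : ∑ k ∈ K, (∫ x in Q d, b x * ψ (ε • (x + vk k)))
        = ∫ x in Q d, b x * ∑ k ∈ K, ψ (ε • (x + vk k)) := by
      rw [← integral_finset_sum K (fun k _ => hterm k)]
      refine integral_congr_ae (Eventually.of_forall fun x => ?_)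
      simp only [Finset.mul_sum]
    -- the local average function
    set S : (Fin d → ℝ) → ℝ := fun x => ∑ k ∈ K, ψ (ε • (x + vk k)) with hSdef
    have hSint : Integrable S (volume.restrict (Q d)) := by
      rw [hSdef]
      exact integrable_finset_sum K (fun k _ => hψterm k)
    have e4 : (∫ x, b (ε⁻¹ • x) * ψ x) = ∫ x in Q d, b x * (ε^d * S x) := by
      rw [e1, e2, e3, smul_eq_mul, ← integral_const_mul]
      refine integral_congr_ae (Eventually.of_forall fun x => ?_)
      ring
    -- c as an integral over Q
    have hψε : Integrable (fun y : Fin d → ℝ => ψ (ε • y)) volume := by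
      have hcs : HasCompactSupport fun y : Fin d → ℝ => ψ (ε • y) :=
        hψc.comp_homeomorph (Homeomorph.smulOfNeZero ε hεne)
      exact (hψ.continuous.comp (continuous_const_smul ε)).integrable_of_hasCompactSupport hcs
    have e5 : c = ∫ x in Q d, ε^d * S x := by
      have hzs : ∀ k : Fin d → ℤ, k ∉ K →
          (∫ x in Q d, (fun y : Fin d → ℝ => ψ (ε • y)) (x + vk k)) = 0 := by
        intro k hk
        rw [setIntegral_congr_fun measurableSet_Q (g := fun _ => (0:ℝ)) (fun x hx => by
          show ψ (ε • (x + vk k)) = 0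
          exact hzero k hk x (norm_le_of_mem_Q hx))]
        simp
      have h0 : c = ε^d • ∫ y, ψ (ε • y) := by
        have h := scale (fun z => ψ (ε • z))
        simp only [smul_inv_smul₀ hεne] at h
        rw [hc, ← h]
      rw [h0, unfold hψε, tsum_eq_sum hzs,
        ← integral_finset_sum K (fun k _ => hψterm k), smul_eq_mul, ← integral_const_mul]
    -- pointwise bound on the averaged oscillation
    have hSbound : ∀ y ∈ Q d, ‖ε^d * S y - c‖ ≤ L * (9*R)^d * ε := by
      intro y hy
      have hconst : (∫ _x in Q d, ε^d * S y) = ε^d * S y := by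
        rw [setIntegral_const, measureReal_def, volume_Q]
        simp
      have hrepr : ε^d * S y - c = ∫ x in Q d, (ε^d * S y - ε^d * S x) := by
        rw [integral_sub (integrableOn_const (C := ε^d * S y) hQfin.ne)
          ((hSint.const_mul (ε^d)) : Integrable (fun x => ε^d * S x) _), hconst, ← e5]
      have hb : ∀ x ∈ Q d, ‖ε^d * S y - ε^d * S x‖ ≤ L * (9*R)^d * ε := by
        intro x hx
        have hyx : ‖y - x‖ ≤ 1 := by
          rw [pi_norm_le_iff_of_nonneg zero_le_one]
          intro i
          have h1 := hy i trivial
          have h2 := hx i trivial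
          rw [Pi.sub_apply, Real.norm_eq_abs, abs_le]
          constructor
          · linarith [h1.1, h2.2.le]
          · linarith [h1.2.le, h2.1]
        have hsplit : ε^d * S y - ε^d * S x
            = ε^d * ∑ k ∈ K, (ψ (ε • (y + vk k)) - ψ (ε • (x + vk k))) := by
          simp only [hSdef]
          rw [Finset.sum_sub_distrib]
          ring
        rw [hsplit, norm_mul, Real.norm_eq_abs, abs_of_nonneg (by positivity : (0:ℝ) ≤ ε^d)]
        have heach : ∀ k ∈ K, ‖ψ (ε • (y + vk k)) - ψ (ε • (x + vk k))‖ ≤ L * ε := by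
          intro k _
          refine le_trans (hlip _ _) ?_
          have hd : ε • (y + vk k) - ε • (x + vk k) = ε • (y - x) := by
            rw [← smul_sub]
            congr 1
            abel
          rw [hd, norm_smul, Real.norm_eq_abs, abs_of_pos hε]
          have h4 := mul_le_mul_of_nonneg_left hyx hε.le
          nlinarith [norm_nonneg (y - x)]
        have hsum : ‖∑ k ∈ K, (ψ (ε • (y + vk k)) - ψ (ε • (x + vk k)))‖
            ≤ (K.card : ℝ) * (L * ε) := by
          refine le_trans (norm_sum_le K _) ?_
          refine le_trans (Finset.sum_le_sum heach) ?_
          rw [Finset.sum_const, nsmul_eq_mul]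
        calc ε^d * ‖∑ k ∈ K, (ψ (ε • (y + vk k)) - ψ (ε • (x + vk k)))‖
            ≤ ε^d * ((K.card : ℝ) * (L * ε)) :=
              mul_le_mul_of_nonneg_left hsum (by positivity)
          _ = ((K.card : ℝ) * ε^d) * (L * ε) := by ring
          _ ≤ (9*R)^d * (L * ε) :=
              mul_le_mul_of_nonneg_right hcard (mul_nonneg hLnn hε.le)
          _ = L * (9*R)^d * ε := by ring
      rw [hrepr]
      refine le_trans (norm_setIntegral_le_of_norm_le_const hQfin hb) ?_
      · rw [measureReal_def, volume_Q]
        simp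
    -- final assembly
    have hbT : Integrable (fun x => b x * (ε^d * S x)) (volume.restrict (Q d)) := by
      have h := (integrable_finset_sum K (fun k _ => hterm k)).const_mul (ε^d)
      refine h.congr (Eventually.of_forall fun x => ?_)
      simp only [hSdef, Finset.mul_sum]
      exact Finset.sum_congr rfl fun k _ => by ring
    have hbc : Integrable (fun x => b x * c) (volume.restrict (Q d)) := hbQ.mul_const c
    have hfinal : (∫ x, b (ε⁻¹ • x) * ψ x) - (∫ y in cellY d, b y) * c
        = ∫ x in Q d, b x * (ε^d * S x - c) := by
      rw [e4, ← hbQint, ← integral_mul_const, ← integral_sub hbT hbc]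
      refine integral_congr_ae (Eventually.of_forall fun x => ?_)
      ring
    rw [hfinal]
    have hsub : Integrable (fun x => b x * (ε^d * S x - c)) (volume.restrict (Q d)) := by
      refine ((hbT.sub hbc).congr (Eventually.of_forall fun x => ?_))
      simp only [Pi.sub_apply]
      ring
    calc ‖∫ x in Q d, b x * (ε^d * S x - c)‖
        ≤ ∫ x in Q d, ‖b x * (ε^d * S x - c)‖ := norm_integral_le_integral_norm _
      _ ≤ ∫ x in Q d, ‖b x‖ * (L * (9*R)^d * ε) := by
          refine setIntegral_mono_on hsub.norm (hbQ.norm.mul_const _) measurableSet_Q ?_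
          intro x hx
          rw [norm_mul]
          exact mul_le_mul_of_nonneg_left (hSbound x hx) (norm_nonneg _)
      _ = ((∫ x in Q d, ‖b x‖) * (L * (9*R)^d)) * ε := by
          rw [integral_mul_const]
          ring
  -- conclusion
  rw [← tendsto_sub_nhds_zero_iff]
  apply squeeze_zero_norm'
    (a := fun ε : ℝ => ((∫ x in Q d, ‖b x‖) * (L * (9*R)^d)) * ε)
  · filter_upwards [Ioc_mem_nhdsGT_of_mem (Set.mem_Ico.mpr ⟨le_refl (0:ℝ), one_pos⟩)] with ε hε
    exact key ε hε
  · have h : Tendsto (fun ε : ℝ => ((∫ x in Q d, ‖b x‖) * (L * (9*R)^d)) * ε)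
        (𝓝 0) (𝓝 (((∫ x in Q d, ‖b x‖) * (L * (9*R)^d)) * 0)) :=
      (continuous_const.mul continuous_id).tendsto 0
    rw [mul_zero] at h
    exact h.mono_left nhdsWithin_le_nhds
end
end

section
/- For every nonzero n ∈ ℤ^d and every pair of multi-index families {g^n_α}_{|α|=m} of complex numbers satisfying Σ_{|α|=m} n^α g^n_α = 0, the matrix defined by G^n_{αβ} = (−g^n_β n^α + g^n_α n^β)/Λ_m(n), where Λ_m(n) = Σ_{|γ|=m} (n^γ)², is skew-symmetric (G^n_{αβ} = −G^n_{βα}) and satisfies Σ_{|β|=m} G^n_{αβ} n^β = g^n_α for each α with |α| = m. -/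
open MeasureTheory Filter Finset Topology

noncomputable section

/-- Fourier-mode algebraic identity: for `0 ≠ n ∈ ℤ^d` and complex
coefficients `{g_α}_{|α|=m}` with `Σ n^α g_α = 0`, the matrix
`G_{αβ} = (−g_β n^α + g_α n^β)/Λ_m(n)`, `Λ_m(n) = Σ_{|γ|=m}(n^γ)²`, is skew-symmetric
and satisfies `Σ_{|β|=m} G_{αβ} n^β = g_α`. -/
theorem stmt9 (d m : ℕ) (hm : 0 < m) (n : Fin d → ℤ) (hn : n ≠ 0)
    (g : (Fin d → Fin (m + 1)) → ℂ)
    (hsol : ∑ α ∈ midx d m, (∏ i, (n i : ℂ) ^ (α i : ℕ)) * g α = 0) :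
    (∀ α ∈ midx d m, ∀ β ∈ midx d m,
      (-(g β) * ∏ i, (n i : ℂ) ^ (α i : ℕ) + g α * ∏ i, (n i : ℂ) ^ (β i : ℕ)) /
          (∑ γ ∈ midx d m, (∏ i, (n i : ℂ) ^ (γ i : ℕ)) ^ 2)
        = -((-(g α) * ∏ i, (n i : ℂ) ^ (β i : ℕ) + g β * ∏ i, (n i : ℂ) ^ (α i : ℕ)) /
          (∑ γ ∈ midx d m, (∏ i, (n i : ℂ) ^ (γ i : ℕ)) ^ 2))) ∧
    (∀ α ∈ midx d m,
      ∑ β ∈ midx d m,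
        ((-(g β) * ∏ i, (n i : ℂ) ^ (α i : ℕ) + g α * ∏ i, (n i : ℂ) ^ (β i : ℕ)) /
            (∑ γ ∈ midx d m, (∏ i, (n i : ℂ) ^ (γ i : ℕ)) ^ 2)) *
          ∏ i, (n i : ℂ) ^ (β i : ℕ)
        = g α) := by
  set N : (Fin d → Fin (m + 1)) → ℂ := fun α => ∏ i, (n i : ℂ) ^ (α i : ℕ) with hN
  set Λ : ℂ := ∑ γ ∈ midx d m, (N γ) ^ 2 with hΛ
  have hΛne : Λ ≠ 0 := by
    obtain ⟨i, hi⟩ := Function.ne_iff.mp hn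
    have hi' : n i ≠ 0 := hi
    set γ0 : Fin d → Fin (m + 1) := fun j => if j = i then ⟨m, Nat.lt_succ_self m⟩ else 0
      with hγ0
    have hmem : γ0 ∈ midx d m := by
      simp only [midx, Finset.mem_filter, Finset.mem_univ, true_and]
      rw [Finset.sum_eq_single i]
      · simp [hγ0]
      · intro b _ hb; simp [hγ0, hb]
      · simp
    have hprod : (∏ j, (n j) ^ (γ0 j : ℕ)) = n i ^ m := by
      rw [Finset.prod_eq_single i]
      · simp [hγ0]
      · intro b _ hb; simp [hγ0, hb]
      · simp
    have hS : (0 : ℤ) < ∑ γ ∈ midx d m, (∏ j, (n j) ^ (γ j : ℕ)) ^ 2 := by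
      refine Finset.sum_pos' (fun γ _ => sq_nonneg _) ⟨γ0, hmem, ?_⟩
      rw [hprod]; positivity
    have hcast : Λ = ((∑ γ ∈ midx d m, (∏ j, (n j) ^ (γ j : ℕ)) ^ 2 : ℤ) : ℂ) := by
      push_cast [hΛ, hN]; rfl
    rw [hcast]
    exact_mod_cast hS.ne'
  constructor
  · intro α _ β _
    rw [← neg_div]; ring_nf
  · intro α hα
    have key : ∑ β ∈ midx d m, ((-(g β) * N α + g α * N β) / Λ) * N β
        = (N α * (-∑ β ∈ midx d m, N β * g β) + g α * Λ) / Λ := by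
      simp only [div_mul_eq_mul_div]
      rw [← Finset.sum_div]
      congr 1
      calc ∑ β ∈ midx d m, (-(g β) * N α + g α * N β) * N β
          = ∑ β ∈ midx d m, (N α * -(N β * g β) + g α * (N β) ^ 2) :=
            Finset.sum_congr rfl (fun β _ => by ring)
        _ = N α * (-∑ β ∈ midx d m, N β * g β) + g α * Λ := by
            rw [Finset.sum_add_distrib, ← Finset.mul_sum, ← Finset.mul_sum, hΛ,
              Finset.sum_neg_distrib]
    have hsol' : ∑ β ∈ midx d m, N β * g β = 0 := hsol
    rw [key, hsol', neg_zero, mul_zero, zero_add, mul_div_assoc, div_self hΛne, mul_one]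
end
end
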